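/- arXiv:2406.13160 — 2 statements merged into one kernel-verified Lean document; each statement's English description precedes it below -/
import Mathlib

section
/- Assume a ∈ U_q^-(g) satisfies ι(a) ∈ A_{Z[q±]}(n). Then for any i ∈ I and n ∈ Z_{≥0}, one has ι( ζ_i^{−n} e_i'^{(n)}(a) ) ∈ A_{Z[q±]}(n), where ζ_i = 1 − q_i² and e_i'^{(n)} = (e_i')^n / [n]_i!. -/
/- Common setting: a symmetrizable generalized Cartan matrix, the field `𝕂 = ℚ(q)`
(with `q = qv`), quantum integers, the negative half `Uq A` of the quantum group
presented by the `q`-Serre relations, its weight spaces, and the root-lattice pairing. -/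

set_option maxHeartbeats 1000000
set_option synthInstance.maxHeartbeats 400000

noncomputable section

structure GCM (I : Type) where
  c : I → I → ℤ
  d : I → ℤ
  d_pos : ∀ i, 0 < d i
  diag : ∀ i, c i i = 2
  offdiag : ∀ i j, i ≠ j → c i j ≤ 0
  dsymm : ∀ i j, d i * c i j = d j * c j i

abbrev 𝕂 : Type := RatFunc ℚ

/-- The indeterminate `q`. -/
def qv : 𝕂 := RatFunc.X

def qNum (t : 𝕂) (n : ℕ) : 𝕂 := (t ^ n - t⁻¹ ^ n) / (t - t⁻¹)

def qFact (t : 𝕂) (n : ℕ) : 𝕂 := ∏ k ∈ Finset.range n, qNum t (k + 1)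

def qBinom (t : 𝕂) (m k : ℕ) : 𝕂 := qFact t m / (qFact t k * qFact t (m - k))

variable {I : Type} [DecidableEq I]

/-- `q_i = q^{d_i}`. -/
def qd (A : GCM I) (i : I) : 𝕂 := qv ^ A.d i

/-- `ζ_i = 1 - q_i^2`. -/
def ze (A : GCM I) (i : I) : 𝕂 := 1 - qd A i ^ 2

/-- The `q`-Serre element `Σ_{k=0}^{b_{ij}} (-1)^k [b_{ij} choose k]_{q_i} a^k b a^{b_{ij}-k}`
for elements `a, b` of any `𝕂`-algebra, where `b_{ij} = 1 - c_{ij}`. -/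
def serreIn {R : Type} [Ring R] [Algebra 𝕂 R] (A : GCM I) (i j : I) (a b : R) : R :=
  ∑ k ∈ Finset.range ((1 - A.c i j).toNat + 1),
    ((-1 : 𝕂) ^ k * qBinom (qd A i) ((1 - A.c i j).toNat) k) •
      (a ^ k * b * a ^ ((1 - A.c i j).toNat - k))

/-- The `q`-Serre relations. -/
inductive URel (A : GCM I) : FreeAlgebra 𝕂 I → FreeAlgebra 𝕂 I → Prop
  | serre (i j : I) (h : i ≠ j) :
      URel A (serreIn A i j (FreeAlgebra.ι 𝕂 i) (FreeAlgebra.ι 𝕂 j)) 0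

/-- The negative half `U_q^-(g)`. -/
abbrev Uq (A : GCM I) : Type := RingQuot (URel A)

/-- The generator `f_i` of `U_q^-(g)`. -/
def fg (A : GCM I) (i : I) : Uq A :=
  RingQuot.mkAlgHom 𝕂 (URel A) (FreeAlgebra.ι 𝕂 i)

/-- The symmetric bilinear pairing on the root lattice, `(α_i, α_j) = d_i c_{ij}`. -/
def ip (A : GCM I) (β γ : I →₀ ℤ) : ℤ :=
  β.sum fun i a => γ.sum fun j b => a * b * (A.d i * A.c i j)

/-- The simple root `α_i` as an element of the root lattice. -/
def sr (i : I) : I →₀ ℤ := Finsupp.single i 1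

/-- The weight space of weight `β` of `U_q^-(g)`, where `wt (f_i) = -α_i`. -/
def Uwt (A : GCM I) (β : I →₀ ℤ) : Submodule 𝕂 (Uq A) :=
  Submodule.span 𝕂 {x | ∃ l : List I,
    -((l.map fun i => Finsupp.single i (1 : ℤ)).sum) = β ∧ x = (l.map (fg A)).prod}


open scoped TensorProduct

/-- The pairing on `U ⊗ U` induced by two functionals. -/
def pairT (A : GCM I) (f g : Uq A →ₗ[𝕂] 𝕂) : Uq A ⊗[𝕂] Uq A →ₗ[𝕂] 𝕂 :=
  TensorProduct.lift ((LinearMap.mul 𝕂 𝕂).compl₁₂ f g)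

/-- The subring `ℤ[q^{±1}] ⊂ ℚ(q)`. -/
def ZqS : Subring 𝕂 := Subring.closure {qv, qv⁻¹}

/-- The `ℤ[q^{±1}]`-form `U⁻_{ℤ[q^{±1}]}(g)`: the subring generated by `ℤ[q^{±1}]`-scalars
and the divided powers `f_i^{(n)} = f_i^n / [n]_i!`. -/
def UZsub (A : GCM I) : Subring (Uq A) :=
  Subring.closure ({x | ∃ c : 𝕂, c ∈ ZqS ∧ x = c • (1 : Uq A)} ∪
    {x | ∃ (i : I) (n : ℕ), x = (qFact (qd A i) n)⁻¹ • fg A i ^ n})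

namespace S3aux
set_option linter.unusedSectionVars false

variable {I : Type} [DecidableEq I]

/-- Monomials in the generators. -/
def mon (A : GCM I) (l : List I) : Uq A := (l.map (fg A)).prod

/-- Weight of a monomial. -/
def wt (l : List I) : I →₀ ℤ := -((l.map fun i => Finsupp.single i (1 : ℤ)).sum)

lemma mon_nil (A : GCM I) : mon A [] = 1 := rfl

lemma mon_cons (A : GCM I) (j : I) (l : List I) :
    mon A (j :: l) = fg A j * mon A l := by simp [mon]

lemma mon_singleton (A : GCM I) (j : I) : mon A [j] = fg A j := by simp [mon]

lemma mon_mem_Uwt (A : GCM I) (l : List I) : mon A l ∈ Uwt A (wt l) :=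
  Submodule.subset_span ⟨l, rfl, rfl⟩

lemma wt_nil : wt ([] : List I) = 0 := by simp [wt]

lemma one_mem_Uwt (A : GCM I) : (1 : Uq A) ∈ Uwt A 0 := by
  have h := mon_mem_Uwt A ([] : List I)
  rwa [mon_nil, wt_nil] at h

lemma fg_mem_Uwt (A : GCM I) (j : I) : fg A j ∈ Uwt A (wt [j]) := by
  have h := mon_mem_Uwt A [j]
  rwa [mon_singleton] at h

/-- Sum of the coefficients of a finsupp. -/
def sig : (I →₀ ℤ) →+ ℤ := Finsupp.liftAddHom fun _ => AddMonoidHom.id ℤ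

lemma sig_wt (l : List I) : sig (wt l) = -(l.length : ℤ) := by
  rw [wt, map_neg, neg_inj]
  induction l with
  | nil => simp
  | cons j l ih =>
    rw [List.map_cons, List.sum_cons, map_add, ih]
    simp [sig]
    push_cast
    ring

lemma wt_cons_ne_zero (j : I) (l : List I) : wt (j :: l) ≠ 0 := by
  intro h
  have := sig_wt (j :: l)
  rw [h, map_zero] at this
  simp at this
  omega

lemma wt_eq_single {l : List I} {j : I} (h : wt l = wt [j]) : l = [j] := by
  have hs := sig_wt l
  rw [h, sig_wt] at hs
  simp at hs
  have hl : l.length = 1 := by omega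
  obtain ⟨k, rfl⟩ := List.length_eq_one_iff.mp hl
  have : Finsupp.single k (1 : ℤ) = Finsupp.single j 1 := by
    have h' := h
    simp only [wt, List.map_cons, List.map_nil, List.sum_cons, List.sum_nil, add_zero,
      neg_inj] at h'
    exact h'
  rw [Finsupp.single_left_injective (one_ne_zero) this]

lemma ip_zero_left (A : GCM I) (γ : I →₀ ℤ) : ip A 0 γ = 0 := by
  simp [ip]

lemma ip_zero_right (A : GCM I) (β : I →₀ ℤ) : ip A β 0 = 0 := by
  simp [ip]

lemma ip_wt_single (A : GCM I) (j i : I) : ip A (wt [j]) (wt [i]) = A.d i * A.c i j := by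
  have hwt : ∀ k : I, wt [k] = Finsupp.single k (-1 : ℤ) := by
    intro k
    simp [wt]
  rw [hwt, hwt, ip]
  rw [Finsupp.sum_single_index (by simp)]
  rw [Finsupp.sum_single_index (by simp)]
  have := A.dsymm i j
  ring_nf
  omega

/-- The counit. -/
def eps (A : GCM I) : Uq A →ₐ[𝕂] 𝕂 :=
  RingQuot.liftAlgHom 𝕂 ⟨FreeAlgebra.lift 𝕂 (fun _ : I => (0 : 𝕂)), by
    intro x y h
    cases h with
    | serre i j hij => simp [serreIn]⟩

lemma eps_fg (A : GCM I) (j : I) : eps A (fg A j) = 0 := by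
  rw [fg, eps, RingQuot.liftAlgHom_mkAlgHom_apply, FreeAlgebra.lift_ι_apply]

lemma eps_mon (A : GCM I) (l : List I) :
    eps A (mon A l) = if l = [] then 1 else 0 := by
  cases l with
  | nil => simp [mon_nil]
  | cons j l => rw [mon_cons, map_mul, eps_fg, zero_mul]; simp

end S3aux
open S3aux

/-- if `ι(a) ∈ A_{ℤ[q^{±1}]}(n)` then
`ι(ζ_i^{-n} e_i'^{(n)}(a)) ∈ A_{ℤ[q^{±1}]}(n)`, where
`A_{ℤ[q^{±1}]}(n) = { f | ⟨f, U⁻_{ℤ[q^{±1}]}(g)⟩ ⊆ ℤ[q^{±1}] }`, `ζ_i = 1 - q_i²` and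
`e_i'^{(n)} = (e_i')^n/[n]_i!`.  The operators `e_i'` and the coordinate ring
`(Aq, ev, ι)` are characterized as in the context. -/
theorem statement3 (A : GCM I)
    -- the operators `e_i'`
    (e' : I → Module.End 𝕂 (Uq A))
    (he'one : ∀ i, e' i 1 = 0)
    (he'f : ∀ i j u, e' i (fg A j * u) =
      (if i = j then u else 0) + qv ^ (-(A.d i * A.c i j)) • (fg A j * e' i u))
    -- the twisted multiplication and coproduct
    (mu2 : Uq A ⊗[𝕂] Uq A →ₗ[𝕂] Uq A ⊗[𝕂] Uq A →ₗ[𝕂] Uq A ⊗[𝕂] Uq A)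
    (hmu2 : ∀ β' γ x y x' y', x' ∈ Uwt A β' → y ∈ Uwt A γ →
      mu2 (x ⊗ₜ[𝕂] y) (x' ⊗ₜ[𝕂] y') = qv ^ (-(ip A β' γ)) • ((x * x') ⊗ₜ[𝕂] (y * y')))
    (Δ : Uq A →ₗ[𝕂] Uq A ⊗[𝕂] Uq A)
    (hΔone : Δ 1 = 1 ⊗ₜ[𝕂] 1)
    (hΔf : ∀ i, Δ (fg A i) = fg A i ⊗ₜ[𝕂] 1 + 1 ⊗ₜ[𝕂] fg A i)
    (hΔmul : ∀ x y, Δ (x * y) = mu2 (Δ x) (Δ y))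
    -- the quantum unipotent coordinate ring
    {Aq : Type} [Ring Aq] [Algebra 𝕂 Aq]
    (ev : Aq →ₗ[𝕂] Uq A →ₗ[𝕂] 𝕂)
    (ι : Uq A ≃ₐ[𝕂] Aq)
    (hι : ∀ i j, ev (ι (fg A i)) (fg A j) =
      if i = j then ((1 : 𝕂) - qd A i ^ 2)⁻¹ else 0)
    (hevone : ev (ι 1) 1 = 1)
    (hevmul : ∀ (x y : Aq) (u : Uq A), ev (x * y) u = pairT A (ev x) (ev y) (Δ u))
    (hevwt : ∀ β γ u v, β ≠ γ → u ∈ Uwt A β → v ∈ Uwt A γ → ev (ι u) v = 0)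
    -- the assumption and the data
    (a : Uq A) (ha : ∀ u ∈ UZsub A, ev (ι a) u ∈ ZqS) (i : I) (n : ℕ) :
    ∀ u ∈ UZsub A,
      ev (ι ((((1 : 𝕂) - qd A i ^ 2) ^ (-(n : ℤ)) * (qFact (qd A i) n)⁻¹) •
        (e' i ^ n) a)) u ∈ ZqS := by
  classical
  intro u hu
  set ζ : 𝕂 := (1 : 𝕂) - qd A i ^ 2 with hζdef
  -- `ζ ≠ 0`
  have hqX : ∀ k : ℕ, k ≠ 0 → (qv : 𝕂) ^ k ≠ 1 := by
    intro k hk h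
    have hinj := RatFunc.algebraMap_injective ℚ
    have hX : (Polynomial.X : Polynomial ℚ) ^ k = 1 := by
      apply hinj
      rw [map_pow, map_one, RatFunc.algebraMap_X]
      exact h
    have hdeg := congrArg Polynomial.natDegree hX
    rw [Polynomial.natDegree_X_pow, Polynomial.natDegree_one] at hdeg
    exact hk hdeg
  have hζ : ζ ≠ 0 := by
    have hq0 : (qv : 𝕂) ≠ 0 := RatFunc.X_ne_zero
    have h2 : qd A i ^ 2 ≠ 1 := by
      have hpos := A.d_pos i
      have hrw : qd A i ^ 2 = qv ^ (A.d i + A.d i) := by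
        rw [qd, sq, ← zpow_add₀ hq0]
      rw [hrw]
      have hnn : (0 : ℤ) ≤ A.d i + A.d i := by omega
      rw [← Int.toNat_of_nonneg hnn, zpow_natCast]
      apply hqX
      omega
    rw [hζdef]
    exact sub_ne_zero_of_ne (Ne.symm h2)
  -- pairT on pure tensors
  have hpairT : ∀ (f g : Uq A →ₗ[𝕂] 𝕂) (x y : Uq A),
      pairT A f g (x ⊗ₜ[𝕂] y) = f x * g y := by
    intro f g x y
    simp [pairT]
  -- monomials span
  have hM : ∀ x : Uq A, x ∈ Submodule.span 𝕂 {x : Uq A | ∃ l, x = mon A l} := by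
    have hmul : ∀ x ∈ Submodule.span 𝕂 {x : Uq A | ∃ l, x = mon A l},
        ∀ y ∈ Submodule.span 𝕂 {x : Uq A | ∃ l, x = mon A l},
        x * y ∈ Submodule.span 𝕂 {x : Uq A | ∃ l, x = mon A l} := by
      intro x hx
      induction hx using Submodule.span_induction with
      | mem x hx =>
        intro y hy
        induction hy using Submodule.span_induction with
        | mem y hy =>
          obtain ⟨b, rfl⟩ := hy
          obtain ⟨a, rfl⟩ := hx
          exact Submodule.subset_span ⟨a ++ b, by simp [mon]⟩
        | zero => rw [mul_zero]; exact Submodule.zero_mem _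
        | add y z hy hz h1 h2 => rw [mul_add]; exact Submodule.add_mem _ h1 h2
        | smul c y hy h => rw [mul_smul_comm]; exact Submodule.smul_mem _ _ h
      | zero => intro y hy; rw [zero_mul]; exact Submodule.zero_mem _
      | add x1 x2 hx1 hx2 hp1 hp2 =>
        intro y hy; rw [add_mul]; exact Submodule.add_mem _ (hp1 y hy) (hp2 y hy)
      | smul c x hx hp =>
        intro y hy; rw [smul_mul_assoc]; exact Submodule.smul_mem _ _ (hp y hy)
    intro x
    obtain ⟨y, rfl⟩ := RingQuot.mkAlgHom_surjective 𝕂 (URel A) x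
    induction y using FreeAlgebra.induction with
    | grade0 r =>
      rw [AlgHom.commutes, Algebra.algebraMap_eq_smul_one]
      exact Submodule.smul_mem _ _ (Submodule.subset_span ⟨[], rfl⟩)
    | grade1 x => exact Submodule.subset_span ⟨[x], (mon_singleton A x).symm⟩
    | mul y1 y2 hp1 hp2 => rw [map_mul]; exact hmul _ hp1 _ hp2
    | add y1 y2 hp1 hp2 => rw [map_add]; exact Submodule.add_mem _ hp1 hp2
  -- the span of pure tensors of monomials
  set TT := Submodule.span 𝕂
    {s : Uq A ⊗[𝕂] Uq A | ∃ a b, s = mon A a ⊗ₜ[𝕂] mon A b} with hTTdef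
  have hmuL : ∀ (j : I), ∀ s ∈ TT, mu2 (fg A j ⊗ₜ[𝕂] (1 : Uq A)) s ∈ TT := by
    intro j s hs
    induction hs using Submodule.span_induction with
    | mem s hs =>
      obtain ⟨a, b, rfl⟩ := hs
      rw [hmu2 (wt a) 0 (fg A j) 1 (mon A a) (mon A b) (mon_mem_Uwt A a) (one_mem_Uwt A)]
      refine Submodule.smul_mem _ _ (Submodule.subset_span ⟨j :: a, b, ?_⟩)
      rw [mon_cons, one_mul]
    | zero => rw [map_zero]; exact Submodule.zero_mem _
    | add x y hx hy h1 h2 => rw [map_add]; exact Submodule.add_mem _ h1 h2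
    | smul c x hx h => rw [map_smul]; exact Submodule.smul_mem _ _ h
  have hmuR : ∀ (j : I), ∀ s ∈ TT, mu2 ((1 : Uq A) ⊗ₜ[𝕂] fg A j) s ∈ TT := by
    intro j s hs
    induction hs using Submodule.span_induction with
    | mem s hs =>
      obtain ⟨a, b, rfl⟩ := hs
      rw [hmu2 (wt a) (wt [j]) 1 (fg A j) (mon A a) (mon A b) (mon_mem_Uwt A a)
        (fg_mem_Uwt A j)]
      refine Submodule.smul_mem _ _ (Submodule.subset_span ⟨a, j :: b, ?_⟩)
      rw [mon_cons, one_mul]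
    | zero => rw [map_zero]; exact Submodule.zero_mem _
    | add x y hx hy h1 h2 => rw [map_add]; exact Submodule.add_mem _ h1 h2
    | smul c x hx h => rw [map_smul]; exact Submodule.smul_mem _ _ h
  have hΔmon : ∀ l : List I, Δ (mon A l) ∈ TT := by
    intro l
    induction l with
    | nil =>
      rw [mon_nil, hΔone]
      exact Submodule.subset_span ⟨[], [], rfl⟩
    | cons j l ih =>
      rw [mon_cons, hΔmul, hΔf j, map_add, LinearMap.add_apply]
      exact Submodule.add_mem _ (hmuL j _ ih) (hmuR j _ ih)
  have hΔT : ∀ v : Uq A, Δ v ∈ TT := by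
    intro v
    have hv := hM v
    induction hv using Submodule.span_induction with
    | mem x hx => obtain ⟨l, rfl⟩ := hx; exact hΔmon l
    | zero => rw [map_zero]; exact Submodule.zero_mem _
    | add x y hx hy h1 h2 => rw [map_add]; exact Submodule.add_mem _ h1 h2
    | smul c x hx h => rw [map_smul]; exact Submodule.smul_mem _ _ h
  -- the counit
  set E : Uq A ⊗[𝕂] Uq A →ₗ[𝕂] Uq A :=
    TensorProduct.lift ((LinearMap.lsmul 𝕂 (Uq A)).comp (eps A).toLinearMap) with hEdef
  have hEt : ∀ x y : Uq A, E (x ⊗ₜ[𝕂] y) = eps A x • y := by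
    intro x y
    rw [hEdef]
    simp
  have hcounit : ∀ v : Uq A, E (Δ v) = v := by
    have hmon : ∀ l : List I, E (Δ (mon A l)) = mon A l := by
      intro l
      induction l with
      | nil => rw [mon_nil, hΔone, hEt]; simp
      | cons j l ih =>
        have h1 : ∀ s ∈ TT, E (mu2 (fg A j ⊗ₜ[𝕂] (1 : Uq A)) s) = 0 := by
          intro s hs
          induction hs using Submodule.span_induction with
          | mem s hs =>
            obtain ⟨a, b, rfl⟩ := hs
            rw [hmu2 (wt a) 0 (fg A j) 1 (mon A a) (mon A b) (mon_mem_Uwt A a)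
              (one_mem_Uwt A), map_smul, hEt, map_mul, eps_fg, zero_mul, zero_smul,
              smul_zero]
          | zero => simp
          | add x y hx hy hh1 hh2 => simp only [map_add]; rw [hh1, hh2, add_zero]
          | smul c x hx hh => simp only [map_smul]; rw [hh, smul_zero]
        have h2 : ∀ s ∈ TT, E (mu2 ((1 : Uq A) ⊗ₜ[𝕂] fg A j) s) = fg A j * E s := by
          intro s hs
          induction hs using Submodule.span_induction with
          | mem s hs =>
            obtain ⟨a, b, rfl⟩ := hs
            rw [hmu2 (wt a) (wt [j]) 1 (fg A j) (mon A a) (mon A b) (mon_mem_Uwt A a)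
              (fg_mem_Uwt A j), map_smul, one_mul, hEt, hEt]
            cases a with
            | nil =>
              rw [wt_nil, ip_zero_left, neg_zero, zpow_zero, one_smul, eps_mon]
              simp [mul_smul_comm]
            | cons k a' =>
              rw [eps_mon]
              simp
          | zero => simp
          | add x y hx hy hh1 hh2 => simp only [map_add]; rw [hh1, hh2, mul_add]
          | smul c x hx hh => simp only [map_smul]; rw [hh, mul_smul_comm]
        rw [mon_cons, hΔmul, hΔf j, map_add, LinearMap.add_apply, map_add,
          h1 _ (hΔmon l), h2 _ (hΔmon l), ih, zero_add]
    intro v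
    have hv := hM v
    induction hv using Submodule.span_induction with
    | mem x hx => obtain ⟨l, rfl⟩ := hx; exact hmon l
    | zero => rw [map_zero, map_zero]
    | add x y hx hy h1 h2 => rw [map_add, map_add, h1, h2]
    | smul c x hx h => rw [map_smul, map_smul, h]
  -- values of the functionals on monomials
  have hφ : ∀ (j : I) (m : List I),
      ev (ι (fg A j)) (mon A m) = if m = [j] then ((1 : 𝕂) - qd A j ^ 2)⁻¹ else 0 := by
    intro j m
    by_cases hm : m = [j]
    · subst hm
      rw [mon_singleton, hι j j, if_pos rfl, if_pos rfl]
    · rw [if_neg hm]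
      refine hevwt (wt [j]) (wt m) _ _ ?_ (fg_mem_Uwt A j) (mon_mem_Uwt A m)
      intro h
      exact hm (wt_eq_single h.symm)
  -- the crucial adjunction
  have hcrux : ∀ x v : Uq A,
      ev (ι (e' i x)) v = ζ * ev (ι x) (fg A i * v) := by
    have hone : ∀ v : Uq A, ev (ι (1 : Uq A)) (fg A i * v) = 0 := by
      intro v
      have hv := hM v
      induction hv using Submodule.span_induction with
      | mem x hx =>
        obtain ⟨m, rfl⟩ := hx
        rw [← mon_cons]
        exact hevwt 0 (wt (i :: m)) _ _ (Ne.symm (wt_cons_ne_zero i m)) (one_mem_Uwt A)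
          (mon_mem_Uwt A _)
      | zero => rw [mul_zero, map_zero]
      | add x y hx hy h1 h2 => rw [mul_add, map_add, h1, h2, add_zero]
      | smul c x hx h => rw [mul_smul_comm, map_smul, h, smul_zero]
    have hkey : ∀ l : List I, ∀ v : Uq A,
        ev (ι (e' i (mon A l))) v = ζ * ev (ι (mon A l)) (fg A i * v) := by
      intro l
      induction l with
      | nil =>
        intro v
        rw [mon_nil, he'one i, map_zero, map_zero, LinearMap.zero_apply, hone, mul_zero]
      | cons j l ih =>
        intro v
        rw [mon_cons, he'f i j (mon A l)]
        set φj := ev (ι (fg A j)) with hφjdef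
        set ψ := ev (ι (mon A l)) with hψdef
        set χ := ev (ι (e' i (mon A l))) with hχdef
        set δ : 𝕂 := if i = j then 1 else 0 with hδdef
        set κ : 𝕂 := qv ^ (-(A.d i * A.c i j)) with hκdef
        have claim : ∀ s ∈ TT,
            δ * ψ (E s) + κ * pairT A φj χ s
              = ζ * pairT A φj ψ (mu2 (fg A i ⊗ₜ[𝕂] (1 : Uq A)) s)
                + ζ * pairT A φj ψ (mu2 ((1 : Uq A) ⊗ₜ[𝕂] fg A i) s) := by
          intro s hs
          induction hs using Submodule.span_induction with
          | mem s hs =>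
            obtain ⟨a, b, rfl⟩ := hs
            rw [hEt,
              hmu2 (wt a) 0 (fg A i) 1 (mon A a) (mon A b) (mon_mem_Uwt A a)
                (one_mem_Uwt A),
              hmu2 (wt a) (wt [i]) 1 (fg A i) (mon A a) (mon A b) (mon_mem_Uwt A a)
                (fg_mem_Uwt A i),
              ip_zero_right, neg_zero, zpow_zero, one_smul, one_mul, one_mul,
              hpairT, (pairT A φj ψ).map_smul, hpairT, hpairT]
            rw [ih (mon A b), ← mon_cons A i a, hδdef, hκdef, hφjdef, hψdef,
              map_smul (ev (ι (mon A l))), smul_eq_mul, smul_eq_mul,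
              hφ j (i :: a), hφ j a]
            rcases a with _ | ⟨k, a'⟩
            · by_cases hij : i = j
              · subst hij
                have hz' : (1 : 𝕂) - qd A i ^ 2 ≠ 0 := by rw [← hζdef]; exact hζ
                rw [hζdef]
                simp [eps_mon, mul_inv_cancel_left₀ hz']
              · simp [eps_mon, hij]
            · by_cases hkj : k :: a' = [j]
              · rw [hkj, ip_wt_single, eps_mon]
                simp only [List.cons.injEq, if_pos rfl, if_neg, reduceIte]
                simp
                ring
              · simp [eps_mon, hkj]
          | zero => simp
          | add x y hx hy hh1 hh2 =>
            simp only [map_add]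
            linear_combination hh1 + hh2
          | smul c x hx hh =>
            simp only [map_smul, smul_eq_mul]
            linear_combination c * hh
        have hite : ev (ι (if i = j then mon A l else 0)) v = δ * ψ v := by
          by_cases hij : i = j <;> simp [hδdef, hij, hψdef]
        have main := claim (Δ v) (hΔT v)
        rw [hcounit v] at main
        have lhs1 : ev (ι ((if i = j then mon A l else 0) + κ • (fg A j * e' i (mon A l)))) v
            = δ * ψ v + κ * pairT A φj χ (Δ v) := by
          rw [map_add ι, map_add ev, LinearMap.add_apply, hite,
            map_smul ι, map_smul ev, LinearMap.smul_apply, smul_eq_mul,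
            map_mul ι, hevmul]
        have rhs1 : ζ * ev (ι (fg A j * mon A l)) (fg A i * v)
            = ζ * pairT A φj ψ (mu2 (fg A i ⊗ₜ[𝕂] (1 : Uq A)) (Δ v))
              + ζ * pairT A φj ψ (mu2 ((1 : Uq A) ⊗ₜ[𝕂] fg A i) (Δ v)) := by
          rw [map_mul ι, hevmul, hΔmul, hΔf i, map_add mu2, LinearMap.add_apply,
            map_add (pairT A φj ψ), mul_add]
        rw [lhs1, rhs1]
        exact main
    intro x v
    have hx := hM x
    induction hx using Submodule.span_induction with
    | mem y hy => obtain ⟨l, rfl⟩ := hy; exact hkey l v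
    | zero => simp
    | add x1 x2 hx1 hx2 h1 h2 =>
      simp only [map_add, LinearMap.add_apply]
      linear_combination h1 + h2
    | smul c x1 hx1 h =>
      simp only [map_smul, LinearMap.smul_apply, smul_eq_mul]
      linear_combination c * h
  -- iterating
  have hpow : ∀ (m : ℕ) (x v : Uq A),
      ev (ι ((e' i ^ m) x)) v = ζ ^ m * ev (ι x) (fg A i ^ m * v) := by
    intro m
    induction m with
    | zero => intro x v; simp
    | succ m ihm =>
      intro x v
      rw [pow_succ, Module.End.mul_apply, ihm, hcrux, ← mul_assoc (fg A i),
        ← pow_succ' (fg A i)]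
      ring
  -- conclusion
  have step : ev (ι ((ζ ^ (-(n : ℤ)) * (qFact (qd A i) n)⁻¹) • (e' i ^ n) a)) u
      = ev (ι a) (((qFact (qd A i) n)⁻¹ • fg A i ^ n) * u) := by
    rw [map_smul, map_smul, LinearMap.smul_apply, smul_eq_mul, hpow n a u,
      smul_mul_assoc, map_smul, smul_eq_mul, zpow_neg, zpow_natCast]
    have hc : (ζ ^ n)⁻¹ * ζ ^ n = 1 := inv_mul_cancel₀ (pow_ne_zero n hζ)
    linear_combination ((qFact (qd A i) n)⁻¹ * ev (ι a) (fg A i ^ n * u)) * hc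
  rw [step]
  exact ha _ (mul_mem (Subring.subset_closure (Or.inr ⟨i, n, rfl⟩)) hu)

end
end

section
/- For any i ∈ I and any homogeneous y ∈ U_q^-(g), one has L(f_i) E_ζ(y) = q^{−(α_i, wt(y))} ( −ζ_i E_ζ(e_i^*(y)) + E_ζ(y) L(f_i) ) in B_q(g), where E_ζ : U_q^-(g) → B_q(g) is the Q(q)-algebra homomorphism with E_ζ(f_i) = ζ_i e_i' and ζ_i = 1 − q_i². -/
/- Common setting: a symmetrizable generalized Cartan matrix, the field `𝕂 = ℚ(q)`
(with `q = qv`), quantum integers, the negative half `Uq A` of the quantum group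
presented by the `q`-Serre relations, its weight spaces, and the root-lattice pairing. -/

set_option maxHeartbeats 1000000
set_option synthInstance.maxHeartbeats 400000

noncomputable section

variable {I : Type} [DecidableEq I]

/- Induct on the monomials spanning the weight space, peeling off the rightmost generator.
Since `E_ζ` is multiplicative, `L(f_i) E_ζ(y f_j) = L(f_i) E_ζ(y) · ζ_j e_j'`; the induction
hypothesis moves `L(f_i)` past `E_ζ(y)`, and the `q`-commutation
`e_j' L(f_i) = δ_{ij} + q^{-(α_i,α_j)} L(f_i) e_j'` moves it past `ζ_j e_j'`. The two `δ_{ij}`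
terms so produced are exactly those of `e_i^*(y f_j) = δ_{ij} y + q^{-(α_i,α_j)} e_i^*(y) f_j`. -/

lemma qv_ne_zero : (qv : 𝕂) ≠ 0 := RatFunc.X_ne_zero

omit [DecidableEq I] in
lemma ip_zero_right (A : GCM I) (β : I →₀ ℤ) : ip A β 0 = 0 := by
  simp [ip]

omit [DecidableEq I] in
lemma ip_sub_right (A : GCM I) (β γ δ : I →₀ ℤ) :
    ip A β (γ - δ) = ip A β γ - ip A β δ := by
  simp only [ip, ← Finsupp.sum_sub]
  refine Finsupp.sum_congr fun i _ => ?_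
  exact Finsupp.sum_sub_index fun j b₁ b₂ => by ring

omit [DecidableEq I] in
lemma ip_sr_sr (A : GCM I) (i j : I) : ip A (sr i) (sr j) = A.d i * A.c i j := by
  simp [ip, sr]

lemma e'_mul_lmul (A : GCM I) (e' : I → Module.End 𝕂 (Uq A))
    (he'f : ∀ i j u, e' i (fg A j * u) =
      (if i = j then u else 0) + qv ^ (-(A.d i * A.c i j)) • (fg A j * e' i u))
    (i j : I) :
    e' j * LinearMap.mul 𝕂 (Uq A) (fg A i) =
      (if i = j then 1 else 0) +
        qv ^ (-(A.d i * A.c i j)) • (LinearMap.mul 𝕂 (Uq A) (fg A i) * e' j) := by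
  ext u
  have := he'f j i u
  rw [← A.dsymm i j] at this
  by_cases h : i = j
  · subst h; simpa using this
  · simpa [h, Ne.symm h] using this

/-- The inductive step of the monomial case, in an arbitrary algebra. -/
lemma mul_mul_eq_of_twisted_comm {k R : Type*} [Field k] [Ring R] [Algebra k R]
    {L U S F E : R} {s t z d : k} (ht : t ≠ 0)
    (hU : L * U = s • (-z • S + U * L))
    (hF : F * L = (d * z) • 1 + t⁻¹ • (L * F))
    (hE : E = d • U + t⁻¹ • (S * F)) :
    L * (U * F) = (s * t) • (-z • E + U * F * L) := by
  have hLF : L * F = t • (F * L - (d * z) • 1) := by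
    rw [hF, add_sub_cancel_left, smul_smul, mul_inv_cancel₀ ht, one_smul]
  rw [← mul_assoc, hU, hE, mul_assoc U F L]
  simp only [add_mul, smul_mul_assoc, mul_assoc, hLF, mul_smul_comm, mul_sub, mul_one]
  match_scalars <;> field_simp

lemma lmul_fg_mul_Eζ_list_prod (A : GCM I) (e' es : I → Module.End 𝕂 (Uq A))
    (he'f : ∀ i j u, e' i (fg A j * u) =
      (if i = j then u else 0) + qv ^ (-(A.d i * A.c i j)) • (fg A j * e' i u))
    (hesone : ∀ i, es i 1 = 0)
    (hesf : ∀ i j u, es i (u * fg A j) =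
      (if i = j then u else 0) + qv ^ (-(A.d i * A.c i j)) • (es i u * fg A j))
    (Eζ : Uq A →ₐ[𝕂] Module.End 𝕂 (Uq A))
    (hEζ : ∀ i, Eζ (fg A i) = ze A i • e' i)
    (i : I) (l : List I) :
    LinearMap.mul 𝕂 (Uq A) (fg A i) * Eζ (l.map (fg A)).prod =
      qv ^ (-(ip A (sr i) (-(l.map fun j => Finsupp.single j (1 : ℤ)).sum))) •
        ((-(ze A i)) • Eζ (es i (l.map (fg A)).prod) +
          Eζ (l.map (fg A)).prod * LinearMap.mul 𝕂 (Uq A) (fg A i)) := by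
  induction l using List.reverseRecOn with
  | nil => simp [hesone, ip_zero_right]
  | append_singleton l j ih =>
    set y := (l.map (fg A)).prod
    have hb : (qv ^ (A.d i * A.c i j))⁻¹ = qv ^ (-(A.d i * A.c i j)) := (zpow_neg _ _).symm
    have hF : Eζ (fg A j) * LinearMap.mul 𝕂 (Uq A) (fg A i) =
        ((if i = j then 1 else 0) * ze A i) • 1 + (qv ^ (A.d i * A.c i j))⁻¹ •
          (LinearMap.mul 𝕂 (Uq A) (fg A i) * Eζ (fg A j)) := by
      rw [hb, hEζ, smul_mul_assoc, e'_mul_lmul A e' he'f, smul_add, mul_smul_comm, smul_comm]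
      by_cases h : i = j
      · subst h; simp
      · simp [h]
    have hE : Eζ (es i (y * fg A j)) = (if i = j then (1 : 𝕂) else 0) • Eζ y +
        (qv ^ (A.d i * A.c i j))⁻¹ • (Eζ (es i y) * Eζ (fg A j)) := by
      rw [hb, hesf, map_add, map_smul, map_mul]
      by_cases h : i = j <;> simp [h]
    have hwt : -((l ++ [j]).map fun j => Finsupp.single j (1 : ℤ)).sum =
        -(l.map fun j => Finsupp.single j (1 : ℤ)).sum - sr j := by
      simp [sr, sub_eq_add_neg, add_comm]
    rw [List.map_append, List.prod_append, List.map_singleton, List.prod_singleton, map_mul,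
      hwt, ip_sub_right, ip_sr_sr, sub_eq_add_neg, neg_add, neg_neg, zpow_add₀ qv_ne_zero]
    exact mul_mul_eq_of_twisted_comm (R := Module.End 𝕂 (Uq A))
      (zpow_ne_zero _ qv_ne_zero) ih hF hE

theorem statement4_general (A : GCM I)
    (e' es : I → Module.End 𝕂 (Uq A))
    (he'f : ∀ i j u, e' i (fg A j * u) =
      (if i = j then u else 0) + qv ^ (-(A.d i * A.c i j)) • (fg A j * e' i u))
    (hesone : ∀ i, es i 1 = 0)
    (hesf : ∀ i j u, es i (u * fg A j) =
      (if i = j then u else 0) + qv ^ (-(A.d i * A.c i j)) • (es i u * fg A j))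
    (Eζ : Uq A →ₐ[𝕂] Module.End 𝕂 (Uq A))
    (hEζ : ∀ i, Eζ (fg A i) = ze A i • e' i)
    (i : I) (β : I →₀ ℤ) (y : Uq A) (hy : y ∈ Uwt A β) :
    LinearMap.mul 𝕂 (Uq A) (fg A i) * Eζ y =
      qv ^ (-(ip A (sr i) β)) •
        ((-(ze A i)) • Eζ (es i y) + Eζ y * LinearMap.mul 𝕂 (Uq A) (fg A i)) := by
  induction hy using Submodule.span_induction with
  | mem x hx =>
    obtain ⟨l, rfl, rfl⟩ := hx
    exact lmul_fg_mul_Eζ_list_prod A e' es he'f hesone hesf Eζ hEζ i l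
  | zero => simp
  | add x y _ _ hx hy =>
    simp only [map_add, mul_add, add_mul, hx, hy, smul_add]
    abel
  | smul a x _ hx =>
    rw [map_smul, map_smul, map_smul, mul_smul_comm, hx, smul_mul_assoc, smul_comm (-ze A i) a,
      ← smul_add, smul_comm a]

/-- for any `i ∈ I` and homogeneous `y` of weight `β`,
`L(f_i) E_ζ(y) = q^{-(α_i, wt y)} ( -ζ_i E_ζ(e_i^*(y)) + E_ζ(y) L(f_i) )` in `End (U_q^-(g))`,
where `E_ζ` is the algebra homomorphism with `E_ζ(f_i) = ζ_i e_i'` and `ζ_i = 1 - q_i²`.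
The operators `e_i'` and `e_i^*` are characterized as in the context, and `L(f_i)` is left
multiplication by `f_i`. -/
theorem statement4 (A : GCM I)
    (e' es : I → Module.End 𝕂 (Uq A))
    (he'one : ∀ i, e' i 1 = 0)
    (he'f : ∀ i j u, e' i (fg A j * u) =
      (if i = j then u else 0) + qv ^ (-(A.d i * A.c i j)) • (fg A j * e' i u))
    (hesone : ∀ i, es i 1 = 0)
    (hesf : ∀ i j u, es i (u * fg A j) =
      (if i = j then u else 0) + qv ^ (-(A.d i * A.c i j)) • (es i u * fg A j))
    (Eζ : Uq A →ₐ[𝕂] Module.End 𝕂 (Uq A))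
    (hEζ : ∀ i, Eζ (fg A i) = ze A i • e' i)
    (i : I) (β : I →₀ ℤ) (y : Uq A) (hy : y ∈ Uwt A β) :
    LinearMap.mul 𝕂 (Uq A) (fg A i) * Eζ y =
      qv ^ (-(ip A (sr i) β)) •
        ((-(ze A i)) • Eζ (es i y) + Eζ y * LinearMap.mul 𝕂 (Uq A) (fg A i)) :=
  statement4_general A e' es he'f hesone hesf Eζ hEζ i β y hy

end
end
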